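/- Adding discrete Laplace noise with parameter a ≤ ε/Δ to a function f : Z^n → ℤ^d with ℓ1-sensitivity Δ yields an ε-differentially private mechanism: for all adjacent datasets D ~ D' and any output o ∈ ℤ^d, Pr[f(D)+ξ = o] ≤ e^ε · Pr[f(D')+ξ = o], where ξ has i.i.d. DLap(a) coordinates. -/
import Mathlib


open Real Finset

/-- The discrete Laplace mechanism: adding i.i.d. `DLap a` noise to each of the `d`
coordinates of `f : Zⁿ → ℤᵈ`, where `a ≤ ε / Δ` and `Δ` bounds the `ℓ₁`-sensitivity of `f`
over an (arbitrary, symmetric) adjacency relation, is `ε`-differentially private: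
for all adjacent `D ~ D'` and every output `o ∈ ℤᵈ`, the probability of outputting `o`
on input `D` is at most `e^ε` times the probability of outputting `o` on input `D'`. -/
theorem dlap_mechanism_dp {Z : Type*} {n d : ℕ}
    (Adj : (Fin n → Z) → (Fin n → Z) → Prop)
    (hsymm : ∀ D D', Adj D D' → Adj D' D)
    (f : (Fin n → Z) → (Fin d → ℤ))
    (Δ ε a : ℝ) (ha : 0 < a) (hε : 0 < ε)
    (hsens : ∀ D D', Adj D D' → (∑ i, |(f D i - f D' i : ℝ)|) ≤ Δ)
    (haε : a * Δ ≤ ε) :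
    ∀ D D' : Fin n → Z, Adj D D' → ∀ o : Fin d → ℤ,
      (∏ i, (Real.exp a - 1) / (Real.exp a + 1) * Real.exp (-a * |(o i - f D i : ℝ)|)) ≤
        Real.exp ε *
          ∏ i, (Real.exp a - 1) / (Real.exp a + 1) * Real.exp (-a * |(o i - f D' i : ℝ)|) := by

  intro D D' hadj o
  have hC : (0:ℝ) ≤ (Real.exp a - 1) / (Real.exp a + 1) := by
    apply div_nonneg
    · linarith [Real.one_le_exp ha.le]
    · positivity
  calc (∏ i, (Real.exp a - 1) / (Real.exp a + 1) * Real.exp (-a * |(o i - f D i : ℝ)|))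
      ≤ ∏ i, Real.exp (a * |(f D i - f D' i : ℝ)|) *
          ((Real.exp a - 1) / (Real.exp a + 1) * Real.exp (-a * |(o i - f D' i : ℝ)|)) := by
        apply Finset.prod_le_prod
        · intro i _; positivity
        · intro i _
          rw [mul_comm (Real.exp _), mul_assoc, ← Real.exp_add]
          apply mul_le_mul_of_nonneg_left _ hC
          apply Real.exp_le_exp.mpr
          have := abs_sub_abs_le_abs_sub ((o i : ℝ) - f D' i) ((o i : ℝ) - f D i)
          have h2 : |(o i : ℝ) - f D' i - ((o i : ℝ) - f D i)| = |(f D i - f D' i : ℝ)| := by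
            congr 1; ring
          nlinarith [ha.le]
    _ = Real.exp (a * ∑ i, |(f D i - f D' i : ℝ)|) *
          ∏ i, (Real.exp a - 1) / (Real.exp a + 1) * Real.exp (-a * |(o i - f D' i : ℝ)|) := by
        rw [Finset.prod_mul_distrib, ← Real.exp_sum, Finset.mul_sum]
    _ ≤ Real.exp ε *
          ∏ i, (Real.exp a - 1) / (Real.exp a + 1) * Real.exp (-a * |(o i - f D' i : ℝ)|) := by
        apply mul_le_mul_of_nonneg_right
        · apply Real.exp_le_exp.mpr
          calc a * ∑ i, |(f D i - f D' i : ℝ)| ≤ a * Δ :=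
                mul_le_mul_of_nonneg_left (hsens D D' hadj) ha.le
            _ ≤ ε := haε
        · apply Finset.prod_nonneg; intro i _; positivity
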